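/- Let (x^k, y^k, γ^k) be iterates of the two-block linearized ADMM (Algorithm 1): x^{k+1} is a global minimizer of f̄^k, y^{k+1} is a global minimizer of h̄^k, and γ^{k+1} = γ^k + β(Ax^{k+1} + By^{k+1}), under Assumption 1 with the parameter choice (★). Then for every k ≥ 1 and every y′_k ∈ ℝ^q with By′_k = −Ax^k (such y′_k exists since Im(A) ⊆ Im(B)), one has m_k ≥ g(x^k, y′_k) + f(x^k) + h(y′_k) + (1/2)‖y^k − y′_k‖², where m_k = L_β(x^k, y^k, γ^k) + C_m‖y^k − y^{k−1}‖². -/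

import Mathlib

open Matrix Filter
open scoped RealInnerProductSpace

noncomputable section

abbrev Vec (m : ℕ) := EuclideanSpace ℝ (Fin m)

def mv {m l : ℕ} (M : Matrix (Fin m) (Fin l) ℝ) (v : Vec l) : Vec m :=
  WithLp.toLp 2 (M.mulVec (WithLp.ofLp v))

def gradx {p q : ℕ} (g : Vec p → Vec q → ℝ) (x : Vec p) (y : Vec q) : Vec p :=
  gradient (fun x' => g x' y) x

def grady {p q : ℕ} (g : Vec p → Vec q → ℝ) (x : Vec p) (y : Vec q) : Vec q :=
  gradient (g x) y

def LipschitzDifferentiable {m : ℕ} (h : Vec m → ℝ) (L : ℝ) : Prop :=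
  Differentiable ℝ h ∧ ∀ y y' : Vec m, ‖gradient h y - gradient h y'‖ ≤ L * ‖y - y'‖

def LipschitzDifferentiable2 {p q : ℕ} (g : Vec p → Vec q → ℝ) (L : ℝ) : Prop :=
  (∀ y, Differentiable ℝ fun x => g x y) ∧ (∀ x, Differentiable ℝ (g x)) ∧
    ∀ x x' : Vec p, ∀ y y' : Vec q,
      Real.sqrt (‖gradx g x y - gradx g x' y'‖ ^ 2 + ‖grady g x y - grady g x' y'‖ ^ 2) ≤
        L * Real.sqrt (‖x - x'‖ ^ 2 + ‖y - y'‖ ^ 2)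

def Lagr {p q n : ℕ} (β : ℝ) (g : Vec p → Vec q → ℝ) (f : Vec p → ℝ) (h : Vec q → ℝ)
    (A : Matrix (Fin n) (Fin p) ℝ) (B : Matrix (Fin n) (Fin q) ℝ)
    (x : Vec p) (y : Vec q) (γ : Vec n) : ℝ :=
  g x y + f x + h y + ⟪γ, mv A x + mv B y⟫ + β / 2 * ‖mv A x + mv B y‖ ^ 2

def fbar {p q n : ℕ} (f : Vec p → ℝ) (g : Vec p → Vec q → ℝ)
    (A : Matrix (Fin n) (Fin p) ℝ) (B : Matrix (Fin n) (Fin q) ℝ) (β Lx : ℝ)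
    (xk : Vec p) (yk : Vec q) (γk : Vec n) (x : Vec p) : ℝ :=
  f x + ⟪γk, mv A x⟫ + Lx / 2 * ‖x - xk‖ ^ 2 +
    ⟪x - xk, gradx g xk yk + β • mv Aᵀ (mv A xk + mv B yk)⟫

def hbar {p q n : ℕ} (g : Vec p → Vec q → ℝ) (h : Vec q → ℝ)
    (A : Matrix (Fin n) (Fin p) ℝ) (B : Matrix (Fin n) (Fin q) ℝ) (β Ly : ℝ)
    (xk1 : Vec p) (yk : Vec q) (γk : Vec n) (y : Vec q) : ℝ :=
  ⟪γk, mv B y⟫ + Ly / 2 * ‖y - yk‖ ^ 2 + β / 2 * ‖mv A xk1 + mv B y‖ ^ 2 +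
    ⟪y - yk, grady g xk1 yk + gradient h yk⟫

def IsSmallestEigenvalue {m : ℕ} (M : Matrix (Fin m) (Fin m) ℝ) (lam : ℝ) : Prop :=
  (∃ v : Fin m → ℝ, v ≠ 0 ∧ M.mulVec v = lam • v) ∧
    ∀ μ : ℝ, (∃ v : Fin m → ℝ, v ≠ 0 ∧ M.mulVec v = μ • v) → lam ≤ μ

def IsLargestEigenvalue {m : ℕ} (M : Matrix (Fin m) (Fin m) ℝ) (lam : ℝ) : Prop :=
  (∃ v : Fin m → ℝ, v ≠ 0 ∧ M.mulVec v = lam • v) ∧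
    ∀ μ : ℝ, (∃ v : Fin m → ℝ, v ≠ 0 ∧ M.mulVec v = μ • v) → μ ≤ lam

def RegularSubgradientAt {m : ℕ} (f : Vec m → ℝ) (x₀ v : Vec m) : Prop :=
  ∀ ε > 0, ∀ᶠ x in nhds x₀, f x₀ + ⟪v, x - x₀⟫ - ε * ‖x - x₀‖ ≤ f x

/-! Write `k = j + 1`, `w = g (x k) · + h`, `e = y k - y'` and `d = y k - y j`. The first-order
condition of the `y`-update together with the multiplier update gives
`Bᵀ γ k = -Ly • d - ∇w (y j)`, and `A x k + B y k = B e`, so the augmented Lagrangian equals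
`w (y k) + f (x k) - Ly ⟪d, e⟫ - ⟪∇w (y j), e⟫ + β/2 ‖B e‖²`. The descent inequality for `w`
between `y k` and `y'`, Cauchy–Schwarz with the Lipschitz bound on `∇w`, and `‖B e‖² ≥ λ ‖e‖²`
reduce the claim to the nonnegativity of a quadratic form in `(‖d‖, ‖e‖)`, whose discriminant
condition is what the parameter choice (★) guarantees. -/

lemma mv_add {m l : ℕ} (M : Matrix (Fin m) (Fin l) ℝ) (a b : Vec l) :
    mv M (a + b) = mv M a + mv M b := by
  simp [mv, mulVec_add]

lemma mv_sub {m l : ℕ} (M : Matrix (Fin m) (Fin l) ℝ) (a b : Vec l) :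
    mv M (a - b) = mv M a - mv M b := by
  simp [mv, mulVec_sub]

lemma mv_smul {m l : ℕ} (M : Matrix (Fin m) (Fin l) ℝ) (r : ℝ) (a : Vec l) :
    mv M (r • a) = r • mv M a := by
  simp [mv, mulVec_smul]

lemma inner_mv {m l : ℕ} (M : Matrix (Fin m) (Fin l) ℝ) (v : Vec m) (w : Vec l) :
    ⟪v, mv M w⟫ = ⟪mv Mᵀ v, w⟫ := by
  simp only [mv, EuclideanSpace.inner_eq_star_dotProduct, star_trivial]
  rw [dotProduct_comm, dotProduct_mulVec, Matrix.mulVec_transpose, dotProduct_comm]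

lemma norm_mv_sq {m l : ℕ} (M : Matrix (Fin m) (Fin l) ℝ) (v : Vec l) :
    ‖mv M v‖ ^ 2 = WithLp.ofLp v ⬝ᵥ ((Mᵀ * M) *ᵥ WithLp.ofLp v) := by
  rw [← real_inner_self_eq_norm_sq, inner_mv, EuclideanSpace.inner_eq_star_dotProduct]
  simp [mv, Matrix.mulVec_mulVec]

lemma norm_sq_eq_dotProduct {m : ℕ} (v : Vec m) :
    ‖v‖ ^ 2 = WithLp.ofLp v ⬝ᵥ WithLp.ofLp v := by
  rw [← real_inner_self_eq_norm_sq, EuclideanSpace.inner_eq_star_dotProduct, star_trivial]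

lemma IsSmallestEigenvalue.posSemidef_sub_smul_one {m : ℕ} {M : Matrix (Fin m) (Fin m) ℝ}
    {lam : ℝ} (hlam : IsSmallestEigenvalue M lam) (hM : M.IsHermitian) :
    (M - lam • 1).PosSemidef := by
  have hN : (M - lam • 1).IsHermitian := hM.sub (isHermitian_one.smul (IsSelfAdjoint.all lam))
  refine hN.posSemidef_iff_eigenvalues_nonneg.mpr fun i => ?_
  set v := hN.eigenvectorBasis i
  have hv : (WithLp.ofLp v : Fin m → ℝ) ≠ 0 := by
    simpa using hN.eigenvectorBasis.orthonormal.ne_zero i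
  have hMv : M *ᵥ WithLp.ofLp v = (hN.eigenvalues i + lam) • WithLp.ofLp v := by
    have := hN.mulVec_eigenvectorBasis i
    rw [sub_mulVec, smul_mulVec, one_mulVec] at this
    rw [add_smul, ← this]; abel
  have := hlam.2 _ ⟨_, hv, hMv⟩
  simp only [Pi.zero_apply]; linarith

lemma IsSmallestEigenvalue.mul_norm_sq_le {q n : ℕ} {B : Matrix (Fin n) (Fin q) ℝ} {lam : ℝ}
    (hlam : IsSmallestEigenvalue (Bᵀ * B) lam) (e : Vec q) :
    lam * ‖e‖ ^ 2 ≤ ‖mv B e‖ ^ 2 := by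
  have hpsd := hlam.posSemidef_sub_smul_one (by simpa using isHermitian_conjTranspose_mul_self B)
  have := hpsd.dotProduct_mulVec_nonneg (WithLp.ofLp e)
  rw [norm_mv_sq, norm_sq_eq_dotProduct]
  simp only [star_trivial, sub_mulVec, smul_mulVec, one_mulVec, dotProduct_sub,
    dotProduct_smul, smul_eq_mul] at this
  linarith

lemma Matrix.mulVec_injective_of_rank_eq_card {K m l : Type*} [Field K] [Fintype m] [Fintype l]
    (B : Matrix m l K) (hB : B.rank = Fintype.card l) : Function.Injective B.mulVec := by
  have h := LinearMap.finrank_range_add_finrank_ker B.mulVecLin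
  rw [← Matrix.rank, hB, Module.finrank_fintype_fun_eq_card, add_eq_left,
    Submodule.finrank_eq_zero] at h
  exact LinearMap.ker_eq_bot.mp h

lemma IsSmallestEigenvalue.pos_of_rank_eq {q n : ℕ} {B : Matrix (Fin n) (Fin q) ℝ} {lam : ℝ}
    (hlam : IsSmallestEigenvalue (Bᵀ * B) lam) (hB : B.rank = q) : 0 < lam := by
  obtain ⟨v, hv, hBv⟩ := hlam.1
  have hinj := B.mulVec_injective_of_rank_eq_card (by simpa using hB)
  have hv' : WithLp.toLp 2 v ≠ (0 : Vec q) := by simpa using hv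
  have hBv' : mv B (WithLp.toLp 2 v) ≠ 0 := by
    simpa [mv] using (hinj.ne hv : B *ᵥ v ≠ B *ᵥ 0)
  have heq : ‖mv B (WithLp.toLp 2 v)‖ ^ 2 = lam * ‖WithLp.toLp 2 v‖ ^ 2 := by
    rw [norm_mv_sq, norm_sq_eq_dotProduct]; simp [hBv]
  exact pos_of_mul_pos_left (heq ▸ pow_pos (norm_pos_iff.mpr hBv') 2)
    (pow_pos (norm_pos_iff.mpr hv') 2).le

lemma le_add_inner_add_mul_norm_sq_of_gradient_lipschitz {E : Type*} [NormedAddCommGroup E]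
    [InnerProductSpace ℝ E] [CompleteSpace E] {w : E → ℝ} {w' : E → E} {L : ℝ}
    (hw : ∀ y, HasGradientAt w (w' y) y) (hlip : ∀ y y', ‖w' y - w' y'‖ ≤ L * ‖y - y'‖)
    (a b : E) : w b ≤ w a + ⟪w' a, b - a⟫ + L * ‖b - a‖ ^ 2 := by
  -- mean value inequality for `w - ⟪w' a, ·⟫` on `[a, b]`; this crude form has `L`, not `L / 2`
  have hL : 0 ≤ L * ‖b - a‖ := (norm_nonneg _).trans (hlip b a)
  have bound : ∀ y ∈ segment ℝ a b,
      ‖InnerProductSpace.toDual ℝ E (w' y) - InnerProductSpace.toDual ℝ E (w' a)‖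
        ≤ L * ‖b - a‖ := by
    rintro _ ⟨s, t, hs, ht, hst, rfl⟩
    rw [← map_sub, LinearIsometryEquiv.norm_map]
    have : s • a + t • b - a = t • (b - a) := by
      obtain rfl : s = 1 - t := by linarith
      module
    calc ‖w' (s • a + t • b) - w' a‖ ≤ L * ‖s • a + t • b - a‖ := hlip _ _
      _ = t * (L * ‖b - a‖) := by
        rw [this, norm_smul, Real.norm_of_nonneg ht]; ring
      _ ≤ L * ‖b - a‖ := mul_le_of_le_one_left hL (by linarith)
  have mvt := (convex_segment a b).norm_image_sub_le_of_norm_hasFDerivWithin_le'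
    (fun y _ => (hw y).hasFDerivAt.hasFDerivWithinAt) bound
    (left_mem_segment ℝ a b) (right_mem_segment ℝ a b)
  rw [InnerProductSpace.toDual_apply_apply, Real.norm_eq_abs] at mvt
  nlinarith [le_abs_self (w b - w a - ⟪w' a, b - a⟫)]

lemma eq_zero_of_forall_inner_add_nonneg {E : Type*} [NormedAddCommGroup E]
    [InnerProductSpace ℝ E] {G : E} {Q : E → ℝ} (hQ : ∀ (t : ℝ) z, Q (t • z) = t ^ 2 * Q z)
    (h : ∀ z, 0 ≤ ⟪G, z⟫ + Q z) : G = 0 := by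
  have key : ∀ t > 0, ‖G‖ ^ 2 ≤ t * Q G := fun t ht => by
    have := h ((-t) • G)
    rw [inner_smul_right, real_inner_self_eq_norm_sq, hQ] at this
    nlinarith
  have : ‖G‖ ^ 2 ≤ 0 := le_of_forall_pos_le_add fun ε hε => by
    have ht : 0 < ε / (|Q G| + 1) := by positivity
    have hle : ε / (|Q G| + 1) * Q G ≤ ε := by
      rw [div_mul_eq_mul_div, div_le_iff₀ (by positivity)]
      nlinarith [le_abs_self (Q G)]
    linarith [key _ ht]
  simpa using this

lemma LipschitzDifferentiable2.norm_grady_sub_le {p q : ℕ} {g : Vec p → Vec q → ℝ} {L : ℝ}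
    (hg : LipschitzDifferentiable2 g L) (x : Vec p) (y y' : Vec q) :
    ‖grady g x y - grady g x y'‖ ≤ L * ‖y - y'‖ := by
  have h := hg.2.2 x x y y'
  rw [sub_self, norm_zero, zero_pow two_ne_zero, zero_add, Real.sqrt_sq (norm_nonneg _)] at h
  exact (Real.le_sqrt_of_sq_le (le_add_of_nonneg_left (sq_nonneg _))).trans h

lemma hasGradientAt_add_of_lipschitzDifferentiable {p q : ℕ} {g : Vec p → Vec q → ℝ}
    {h : Vec q → ℝ} {Lg Lh : ℝ} (hg : LipschitzDifferentiable2 g Lg)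
    (hh : LipschitzDifferentiable h Lh) (x : Vec p) (y : Vec q) :
    HasGradientAt (fun z => g x z + h z) (grady g x y + gradient h y) y := by
  rw [hasGradientAt_iff_hasFDerivAt, map_add]
  exact ((hg.2.1 x y).hasGradientAt.hasFDerivAt).add (hh.1 y).hasGradientAt.hasFDerivAt

lemma norm_grady_add_gradient_sub_le {p q : ℕ} {g : Vec p → Vec q → ℝ}
    {h : Vec q → ℝ} {Lg Lh : ℝ} (hg : LipschitzDifferentiable2 g Lg)
    (hh : LipschitzDifferentiable h Lh) (x : Vec p) (y y' : Vec q) :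
    ‖(grady g x y + gradient h y) - (grady g x y' + gradient h y')‖ ≤ (Lg + Lh) * ‖y - y'‖ :=
  calc _ = ‖(grady g x y - grady g x y') + (gradient h y - gradient h y')‖ := by congr 1; abel
    _ ≤ Lg * ‖y - y'‖ + Lh * ‖y - y'‖ :=
      (norm_add_le _ _).trans (add_le_add (hg.norm_grady_sub_le x y y') (hh.2 y y'))
    _ = (Lg + Lh) * ‖y - y'‖ := by ring

section Parameters

variable {Lw Ly β Cm lam : ℝ}

lemma nonneg_of_paramChoice (hLy : Ly ≥ Lw + Lw ^ 2 + 3) (hlam : 0 < lam)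
    (hβ1 : β ≥ (Lw + Ly + 2) / lam) : 0 ≤ Ly ∧ 0 ≤ β := by
  have h1 : Lw + Ly + 2 ≤ β * lam := (div_le_iff₀ hlam).mp hβ1
  constructor
  · nlinarith [sq_nonneg (Lw + 1 / 2)]
  · nlinarith [sq_nonneg (Lw + 1)]

lemma quadratic_le_of_paramChoice (hLy : Ly ≥ Lw + Lw ^ 2 + 3) (hCm : Cm = (Ly + Lw ^ 2) / 2)
    (hlam : 0 < lam) (hβ1 : β ≥ (Lw + Ly + 2) / lam)
    (hβ2 : β ≥ 3 * (Lw ^ 2 + Ly ^ 2) / (lam * Cm)) (D E : ℝ) :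
    (Lw + Ly) * (D * E) + (Lw + 1 / 2) * E ^ 2 ≤ Cm * D ^ 2 + β * lam / 2 * E ^ 2 := by
  have hCm0 : 0 < Cm := by nlinarith [sq_nonneg (Lw + 1 / 2)]
  have h1 : Lw + Ly + 2 ≤ β * lam := (div_le_iff₀ hlam).mp hβ1
  have h2 : 3 * (Lw ^ 2 + Ly ^ 2) ≤ β * (lam * Cm) := (div_le_iff₀ (by positivity)).mp hβ2
  have hc : β * lam / 6 ≤ β * lam / 2 - Lw - 1 / 2 := by nlinarith [sq_nonneg (Lw - 1 / 2)]
  have hdisc : (Lw + Ly) ^ 2 ≤ 4 * Cm * (β * lam / 2 - Lw - 1 / 2) := by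
    nlinarith [sq_nonneg (Lw - Ly)]
  -- 4 Cm (Cm D² - b D E + c E²) = (2 Cm D - b E)² + (4 Cm c - b²) E², with b = Lw + Ly
  have : 0 ≤ 4 * Cm *
      (Cm * D ^ 2 - (Lw + Ly) * (D * E) + (β * lam / 2 - Lw - 1 / 2) * E ^ 2) := by
    nlinarith [sq_nonneg (2 * Cm * D - (Lw + Ly) * E),
      mul_nonneg (sub_nonneg.2 hdisc) (sq_nonneg E)]
  have := (mul_nonneg_iff_of_pos_left (by positivity : 0 < 4 * Cm)).mp this
  linarith

end Parameters

def hbarGrad {p q n : ℕ} (g : Vec p → Vec q → ℝ) (h : Vec q → ℝ)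
    (A : Matrix (Fin n) (Fin p) ℝ) (B : Matrix (Fin n) (Fin q) ℝ) (β Ly : ℝ)
    (xk1 : Vec p) (yk : Vec q) (γk : Vec n) (y : Vec q) : Vec q :=
  mv Bᵀ γk + Ly • (y - yk) + β • mv Bᵀ (mv A xk1 + mv B y) + (grady g xk1 yk + gradient h yk)

section LinearizedStep

variable {p q n : ℕ} {g : Vec p → Vec q → ℝ} {h : Vec q → ℝ}
  {A : Matrix (Fin n) (Fin p) ℝ} {B : Matrix (Fin n) (Fin q) ℝ} {β Ly : ℝ}
  {xk1 : Vec p} {yk : Vec q} {γk : Vec n}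

lemma hbar_add (y z : Vec q) :
    hbar g h A B β Ly xk1 yk γk (y + z) = hbar g h A B β Ly xk1 yk γk y +
      ⟪hbarGrad g h A B β Ly xk1 yk γk y, z⟫ + (Ly / 2 * ‖z‖ ^ 2 + β / 2 * ‖mv B z‖ ^ 2) := by
  have e1 : y + z - yk = (y - yk) + z := by abel
  simp only [hbar, hbarGrad, e1, norm_add_sq_real, inner_add_right, inner_add_left,
    real_inner_smul_left, inner_mv, mv_add]
  rw [real_inner_comm z (grady g xk1 yk), real_inner_comm z (gradient h yk)]
  ring

lemma hbarGrad_eq_zero_of_isMin {y : Vec q}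
    (hmin : ∀ y', hbar g h A B β Ly xk1 yk γk y ≤ hbar g h A B β Ly xk1 yk γk y') :
    hbarGrad g h A B β Ly xk1 yk γk y = 0 := by
  refine eq_zero_of_forall_inner_add_nonneg
    (Q := fun z => Ly / 2 * ‖z‖ ^ 2 + β / 2 * ‖mv B z‖ ^ 2) (fun t z => ?_) (fun z => ?_)
  · simp only [mv_smul, norm_smul, mul_pow, Real.norm_eq_abs, sq_abs]; ring
  · have := hmin (y + z)
    rw [hbar_add] at this
    linarith

lemma lagr_eq_of_hbarGrad_eq_zero {f : Vec p → ℝ} {yj y' : Vec q} {γj : Vec n}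
    (hopt : hbarGrad g h A B β Ly xk1 yj γj yk = 0) (hy' : mv B y' = -mv A xk1) :
    Lagr β g f h A B xk1 yk (γj + β • (mv A xk1 + mv B yk)) =
      g xk1 yk + f xk1 + h yk - Ly * ⟪yk - yj, yk - y'⟫ -
        ⟪grady g xk1 yj + gradient h yj, yk - y'⟫ + β / 2 * ‖mv B (yk - y')‖ ^ 2 := by
  have hres : mv A xk1 + mv B yk = mv B (yk - y') := by rw [mv_sub, hy']; abel
  have hdual : mv Bᵀ (γj + β • (mv A xk1 + mv B yk)) =
      -(Ly • (yk - yj)) - (grady g xk1 yj + gradient h yj) := by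
    rw [hbarGrad] at hopt
    rw [mv_add, mv_smul]
    linear_combination (norm := module) hopt
  rw [Lagr, hres, inner_mv, ← hres, hdual, inner_sub_left, inner_neg_left, real_inner_smul_left]
  ring

end LinearizedStep

theorem lagr_add_sq_ge_of_hbar_isMin {p q n : ℕ}
    {A : Matrix (Fin n) (Fin p) ℝ} {B : Matrix (Fin n) (Fin q) ℝ}
    {g : Vec p → Vec q → ℝ} {f : Vec p → ℝ} {h : Vec q → ℝ} {Lg Lh Ly β Cm lamB : ℝ}
    {xk : Vec p} {yj yk y' : Vec q} {γj : Vec n}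
    (hh : LipschitzDifferentiable h Lh) (hg : LipschitzDifferentiable2 g Lg)
    (hlamB : IsSmallestEigenvalue (Bᵀ * B) lamB) (hlam : 0 < lamB)
    (hLy : Ly ≥ (Lg + Lh) + (Lg + Lh) ^ 2 + 3) (hCm : Cm = (Ly + (Lg + Lh) ^ 2) / 2)
    (hβ1 : β ≥ (Lg + Lh + Ly + 2) / lamB)
    (hβ2 : β ≥ 3 * ((Lg + Lh) ^ 2 + Ly ^ 2) / (lamB * Cm))
    (hmin : ∀ y'', hbar g h A B β Ly xk yj γj yk ≤ hbar g h A B β Ly xk yj γj y'')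
    (hy' : mv B y' = -mv A xk) :
    Lagr β g f h A B xk yk (γj + β • (mv A xk + mv B yk)) + Cm * ‖yk - yj‖ ^ 2 ≥
      g xk y' + f xk + h y' + 1 / 2 * ‖yk - y'‖ ^ 2 := by
  have hlip := norm_grady_add_gradient_sub_le hg hh xk
  have hdescent := le_add_inner_add_mul_norm_sq_of_gradient_lipschitz
    (hasGradientAt_add_of_lipschitzDifferentiable hg hh xk) hlip yk y'
  rw [lagr_eq_of_hbarGrad_eq_zero (hbarGrad_eq_zero_of_isMin hmin) hy']
  rw [← neg_sub yk y', inner_neg_right, norm_neg] at hdescent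
  set e := yk - y'
  set d := yk - yj
  have hcs := neg_le_of_abs_le ((abs_real_inner_le_norm _ e).trans
    (mul_le_mul_of_nonneg_right (hlip yk yj) (norm_nonneg e)))
  rw [inner_sub_left] at hcs
  obtain ⟨hLy0, hβ0⟩ := nonneg_of_paramChoice hLy hlam hβ1
  have hde := mul_le_mul_of_nonneg_left (real_inner_le_norm d e) hLy0
  have heig := mul_le_mul_of_nonneg_left (hlamB.mul_norm_sq_le e) hβ0
  linarith [quadratic_le_of_paramChoice hLy hCm hlam hβ1 hβ2 ‖d‖ ‖e‖]

theorem statement8_general {p q n : ℕ}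
    (A : Matrix (Fin n) (Fin p) ℝ) (B : Matrix (Fin n) (Fin q) ℝ)
    (g : Vec p → Vec q → ℝ) (f : Vec p → ℝ) (h : Vec q → ℝ)
    (Lg Lh Ly β Cm lamB : ℝ)
    (x : ℕ → Vec p) (y : ℕ → Vec q) (γ : ℕ → Vec n)
    -- Assumption 1
    (hh : LipschitzDifferentiable h Lh)
    (hg : LipschitzDifferentiable2 g Lg)
    (hrank : B.rank = q)
    -- extreme eigenvalues of AᵀA and BᵀB
    (hlamB : IsSmallestEigenvalue (Bᵀ * B) lamB)
    -- parameter choice (★)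
    (hLy : Ly ≥ (Lg + Lh) + (Lg + Lh) ^ 2 + 3)
    (hCm : Cm = (Ly + (Lg + Lh) ^ 2) / 2)
    (hβ : β ≥ max (max ((Lg + Lh + Ly + 2) / lamB)
        (3 * ((Lg + Lh) ^ 2 + Ly ^ 2) / (lamB * Cm))) (3 * Ly ^ 2 / lamB))
    -- Algorithm 1 iterations
    (hymin : ∀ (k : ℕ) (y' : Vec q),
      hbar g h A B β Ly (x (k + 1)) (y k) (γ k) (y (k + 1)) ≤
        hbar g h A B β Ly (x (k + 1)) (y k) (γ k) y')
    (hγup : ∀ k : ℕ, γ (k + 1) = γ k + β • (mv A (x (k + 1)) + mv B (y (k + 1)))) :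
    ∀ k : ℕ, 1 ≤ k → ∀ y' : Vec q, mv B y' = -(mv A (x k)) →
      Lagr β g f h A B (x k) (y k) (γ k) + Cm * ‖y k - y (k - 1)‖ ^ 2 ≥
        g (x k) y' + f (x k) + h y' + 1 / 2 * ‖y k - y'‖ ^ 2 := by
  intro k hk y' hy'
  obtain ⟨j, rfl⟩ := Nat.exists_eq_add_of_le' hk
  have hβ' := (le_max_left _ _).trans hβ
  rw [Nat.add_sub_cancel, hγup j]
  exact lagr_add_sq_ge_of_hbar_isMin hh hg hlamB (hlamB.pos_of_rank_eq hrank) hLy hCm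
    ((le_max_left _ _).trans hβ') ((le_max_right _ _).trans hβ') (hymin j) hy'

theorem statement8 {p q n : ℕ}
    (A : Matrix (Fin n) (Fin p) ℝ) (B : Matrix (Fin n) (Fin q) ℝ)
    (g : Vec p → Vec q → ℝ) (f : Vec p → ℝ) (h : Vec q → ℝ)
    (Lg Lh Lx Ly β Cm LA lamB : ℝ)
    (x : ℕ → Vec p) (y : ℕ → Vec q) (γ : ℕ → Vec n)
    -- Assumption 1
    (hh : LipschitzDifferentiable h Lh)
    (hg : LipschitzDifferentiable2 g Lg)
    (hlb : ∃ c : ℝ, ∀ (x' : Vec p) (y' : Vec q),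
      mv A x' + mv B y' = 0 → c ≤ g x' y' + f x' + h y')
    (hcoercive : ∀ (u : ℕ → Vec p) (v : ℕ → Vec q),
      (∀ k, mv A (u k) + mv B (v k) = 0) →
      Tendsto (fun k => ‖v k‖) atTop atTop →
      Tendsto (fun k => g (u k) (v k) + f (u k) + h (v k)) atTop atTop)
    (hrank : B.rank = q)
    (himg : Set.range (mv A) ⊆ Set.range (mv B))
    -- extreme eigenvalues of AᵀA and BᵀB
    (hLA : IsLargestEigenvalue (Aᵀ * A) LA)
    (hlamB : IsSmallestEigenvalue (Bᵀ * B) lamB)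
    (hLxpos : 0 < Lx) (hLypos : 0 < Ly) (hβpos : 0 < β)
    -- parameter choice (★)
    (hLx : Lx ≥ Lg + β * LA + 6 * (Lg + Lh) ^ 2 + 1)
    (hLy : Ly ≥ (Lg + Lh) + (Lg + Lh) ^ 2 + 3)
    (hCm : Cm = (Ly + (Lg + Lh) ^ 2) / 2)
    (hβ : β ≥ max (max ((Lg + Lh + Ly + 2) / lamB)
        (3 * ((Lg + Lh) ^ 2 + Ly ^ 2) / (lamB * Cm))) (3 * Ly ^ 2 / lamB))
    -- Algorithm 1 iterations
    (hxmin : ∀ (k : ℕ) (x' : Vec p),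
      fbar f g A B β Lx (x k) (y k) (γ k) (x (k + 1)) ≤
        fbar f g A B β Lx (x k) (y k) (γ k) x')
    (hymin : ∀ (k : ℕ) (y' : Vec q),
      hbar g h A B β Ly (x (k + 1)) (y k) (γ k) (y (k + 1)) ≤
        hbar g h A B β Ly (x (k + 1)) (y k) (γ k) y')
    (hγup : ∀ k : ℕ, γ (k + 1) = γ k + β • (mv A (x (k + 1)) + mv B (y (k + 1)))) :
    ∀ k : ℕ, 1 ≤ k → ∀ y' : Vec q, mv B y' = -(mv A (x k)) →
      Lagr β g f h A B (x k) (y k) (γ k) + Cm * ‖y k - y (k - 1)‖ ^ 2 ≥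
        g (x k) y' + f (x k) + h y' + 1 / 2 * ‖y k - y'‖ ^ 2 :=
  statement8_general A B g f h Lg Lh Ly β Cm lamB x y γ hh hg hrank hlamB hLy hCm hβ hymin hγup
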